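/- arXiv:math/0508057 — 5 statements merged into one kernel-verified Lean document; each statement's English description precedes it below -/
import Mathlib

section
/- Let B be a symmetric bilinear form on a real vector space V and let α, β ∈ V with B(α,α) = B(β,β) = 1 and B(α,β) = -cos(π/m) for an integer m ≥ 2. Then the product of reflections r_α ∘ r_β has order exactly m in GL(V) when restricted to the span of α and β (equivalently, (r_α ∘ r_β)^m = id on span{α,β} and no smaller positive power is the identity there). -/
/-!
Put `θ = π / m`. The product `r_α ∘ r_β` maps the point `sin (φ + θ) • α + sin φ • β` of the
curve `dihedralOrbit α β θ` to the point with parameter `φ + 2θ`: each reflection advances the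
parameter by `θ`, which is the identity `sin (φ + 2θ) + sin φ = 2 cos θ sin (φ + θ)`. Since the
parameters `0` and `-θ` give nonzero multiples of `α` and `β`, the `m`-th power, a shift by `2π`,
fixes the span. For `0 < k < m` the shift by `2kθ` moves `α`: comparing coefficients (linear
independence) would force `2kθ = π`, and then the `α`-coefficient is `-sin θ ≠ sin θ`.
-/

open Real Submodule

lemma sin_add_two_mul_add_sin (φ θ : ℝ) :
    sin (φ + 2 * θ) + sin φ = 2 * cos θ * sin (φ + θ) := by
  have h₁ := sin_add (φ + θ) θ
  have h₂ := sin_sub (φ + θ) θ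
  rw [add_sub_cancel_right] at h₂
  rw [show φ + 2 * θ = φ + θ + θ by ring, h₁, h₂]
  ring

lemma eq_pi_of_sin_eq_zero {x : ℝ} (h₀ : 0 < x) (h₂ : x < 2 * π) (hx : sin x = 0) : x = π := by
  have := (sin_eq_zero_iff_of_lt_of_lt (x := x - π) (by linarith) (by linarith)).1
    (by rw [sin_sub_pi, hx, neg_zero])
  linarith

section

variable {V : Type*} [AddCommGroup V] [Module ℝ V] {B : V →ₗ[ℝ] V →ₗ[ℝ] ℝ}

noncomputable def unitReflection {γ : V} (hγ : B γ γ = 1) : V ≃ₗ[ℝ] V :=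
  Module.reflection (x := γ) (f := 2 • B.flip γ) (by simp [hγ])

lemma unitReflection_apply {γ : V} (hγ : B γ γ = 1) (x : V) :
    unitReflection hγ x = x - (2 * B x γ) • γ := by
  simp [unitReflection, Module.reflection_apply]

noncomputable def dihedralOrbit (α β : V) (θ φ : ℝ) : V := sin (φ + θ) • α + sin φ • β

lemma dihedralOrbit_zero (α β : V) (θ : ℝ) : dihedralOrbit α β θ 0 = sin θ • α := by
  simp [dihedralOrbit]

lemma dihedralOrbit_neg (α β : V) (θ : ℝ) : dihedralOrbit α β θ (-θ) = -sin θ • β := by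
  simp [dihedralOrbit]

lemma dihedralOrbit_add_two_pi (α β : V) (θ φ : ℝ) :
    dihedralOrbit α β θ (φ + 2 * π) = dihedralOrbit α β θ φ := by
  simp only [dihedralOrbit, add_right_comm φ (2 * π), sin_add_two_pi]

lemma unitReflection_sin_smul_add {γ δ : V} (hγ : B γ γ = 1) {θ : ℝ} (hδγ : B δ γ = -cos θ)
    (φ : ℝ) :
    unitReflection hγ (sin (φ + θ) • δ + sin φ • γ) =
      sin (φ + θ) • δ + sin (φ + 2 * θ) • γ := by
  rw [unitReflection_apply, eq_sub_of_add_eq (sin_add_two_mul_add_sin φ θ)]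
  simp only [map_add, map_smul, LinearMap.add_apply, LinearMap.smul_apply, hγ, hδγ, smul_eq_mul]
  module

variable {α β : V} {θ : ℝ}

lemma unitReflection_mul_apply_dihedralOrbit (hα : B α α = 1) (hβ : B β β = 1)
    (hαβ : B α β = -cos θ) (hβα : B β α = -cos θ) (φ : ℝ) :
    (unitReflection hα * unitReflection hβ) (dihedralOrbit α β θ φ) =
      dihedralOrbit α β θ (φ + 2 * θ) := by
  have hα' := unitReflection_sin_smul_add hα hβα (φ + θ)
  rw [show φ + θ + θ = φ + 2 * θ by ring, show φ + θ + 2 * θ = φ + 2 * θ + θ by ring] at hα'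
  rw [LinearEquiv.mul_apply, dihedralOrbit, unitReflection_sin_smul_add hβ hαβ, add_comm, hα',
    dihedralOrbit, add_comm]

lemma unitReflection_mul_pow_apply_dihedralOrbit (hα : B α α = 1) (hβ : B β β = 1)
    (hαβ : B α β = -cos θ) (hβα : B β α = -cos θ) (k : ℕ) (φ : ℝ) :
    ((unitReflection hα * unitReflection hβ) ^ k) (dihedralOrbit α β θ φ) =
      dihedralOrbit α β θ (φ + 2 * k * θ) := by
  induction k with
  | zero => simp
  | succ k ih =>
    rw [pow_succ', LinearEquiv.mul_apply, ih, unitReflection_mul_apply_dihedralOrbit hα hβ hαβ hβα]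
    congr 1
    push_cast
    ring

lemma unitReflection_mul_pow_eqOn_span (hα : B α α = 1) (hβ : B β β = 1)
    (hαβ : B α β = -cos θ) (hβα : B β α = -cos θ) (hθ : sin θ ≠ 0) {k : ℕ} (hk : k * θ = π) :
    ∀ x ∈ span ℝ {α, β}, ((unitReflection hα * unitReflection hβ) ^ k) x = x := by
  have hfix (φ : ℝ) : ((unitReflection hα * unitReflection hβ) ^ k) (dihedralOrbit α β θ φ) =
      dihedralOrbit α β θ φ := by
    rw [unitReflection_mul_pow_apply_dihedralOrbit hα hβ hαβ hβα, mul_assoc, hk,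
      dihedralOrbit_add_two_pi]
  intro x hx
  refine LinearMap.eqOn_span (f := ((unitReflection hα * unitReflection hβ) ^ k).toLinearMap)
    (g := LinearMap.id) ?_ hx
  rintro _ (rfl | rfl)
  · apply smul_right_injective V hθ
    simpa [dihedralOrbit_zero] using hfix 0
  · apply smul_right_injective V (neg_ne_zero.2 hθ)
    simpa [dihedralOrbit_neg] using hfix (-θ)

lemma unitReflection_mul_pow_apply_ne (hα : B α α = 1) (hβ : B β β = 1)
    (hαβ : B α β = -cos θ) (hβα : B β α = -cos θ) (hind : LinearIndependent ℝ ![α, β])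
    (hθ : sin θ ≠ 0) {k : ℕ} (hk₀ : 0 < k * θ) (hk : k * θ < π) :
    ((unitReflection hα * unitReflection hβ) ^ k) α ≠ α := by
  intro h
  have hfix : dihedralOrbit α β θ (2 * k * θ) = dihedralOrbit α β θ 0 := by
    rw [← zero_add (2 * k * θ), ← unitReflection_mul_pow_apply_dihedralOrbit hα hβ hαβ hβα,
      dihedralOrbit_zero, map_smul, h]
  obtain ⟨hα_coeff, hβ_coeff⟩ := LinearIndependent.pair_iff.mp hind
    (sin (2 * k * θ + θ) - sin θ) (sin (2 * k * θ))
    (by rw [dihedralOrbit, dihedralOrbit_zero] at hfix; linear_combination (norm := module) hfix)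
  have hπ : 2 * k * θ = π := eq_pi_of_sin_eq_zero (by linarith) (by linarith) hβ_coeff
  rw [hπ, add_comm, sin_add_pi] at hα_coeff
  exact hθ (by linarith)

end

theorem product_of_reflections_order_m_on_span
    (V : Type*) [AddCommGroup V] [Module ℝ V]
    (B : V →ₗ[ℝ] V →ₗ[ℝ] ℝ) (hsymm : ∀ x y, B x y = B y x)
    (α β : V) (hα : B α α = 1) (hβ : B β β = 1)
    (hind : LinearIndependent ℝ ![α, β])
    (m : ℕ) (hm : 2 ≤ m) (hab : B α β = - Real.cos (Real.pi / m))
    (rα rβ : V → V)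
    (hrα : ∀ x, rα x = x - (2 * B x α) • α)
    (hrβ : ∀ x, rβ x = x - (2 * B x β) • β) :
    (∀ x ∈ Submodule.span ℝ {α, β}, (rα ∘ rβ)^[m] x = x) ∧
    (∀ k : ℕ, 0 < k → k < m →
      ∃ x ∈ Submodule.span ℝ {α, β}, (rα ∘ rβ)^[k] x ≠ x) := by
  have hm₀ : (0 : ℝ) < m := by positivity
  have hθ : sin (π / m) ≠ 0 := by
    refine (sin_pos_of_pos_of_lt_pi (by positivity) ?_).ne'
    rw [div_lt_iff₀ hm₀]
    nlinarith [pi_pos, show (2 : ℝ) ≤ m by exact_mod_cast hm]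
  have hba : B β α = -cos (π / m) := by rw [hsymm, hab]
  have hr : rα ∘ rβ = ⇑(unitReflection hα * unitReflection hβ) := by
    ext x
    simp [hrα, hrβ, unitReflection_apply]
  simp only [hr, ← LinearEquiv.coe_pow]
  refine ⟨unitReflection_mul_pow_eqOn_span hα hβ hab hba hθ (by field_simp), fun k hk hkm => ?_⟩
  refine ⟨α, subset_span (by simp), unitReflection_mul_pow_apply_ne hα hβ hab hba hind hθ
    (by positivity) ?_⟩
  rw [mul_div_assoc', div_lt_iff₀ hm₀, mul_comm π]
  gcongr
end

section
/- Let B be a symmetric bilinear form on a real vector space V and let α, β ∈ V with B(α,α) = B(β,β) = 1 and B(α,β) ≤ -1. Then the restriction of B to the span of {α, β} is not positive definite, and the product r_α ∘ r_β has infinite order. -/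
theorem not_posdef_and_infinite_order
    (V : Type*) [AddCommGroup V] [Module ℝ V]
    (B : V →ₗ[ℝ] V →ₗ[ℝ] ℝ) (hsymm : ∀ x y, B x y = B y x)
    (α β : V) (hα : B α α = 1) (hβ : B β β = 1)
    (hind : LinearIndependent ℝ ![α, β])
    (hab : B α β ≤ -1)
    (rα rβ : V → V)
    (hrα : ∀ x, rα x = x - (2 * B x α) • α)
    (hrβ : ∀ x, rβ x = x - (2 * B x β) • β) :
    (∃ x ∈ Submodule.span ℝ {α, β}, x ≠ 0 ∧ B x x ≤ 0) ∧
    (∀ n : ℕ, 0 < n → ∃ x : V, (rα ∘ rβ)^[n] x ≠ x) := by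
  set c : ℝ := B α β with hc
  have hba : B β α = c := (hsymm β α)
  have hpair := LinearIndependent.pair_iff.mp hind
  constructor
  · refine ⟨α + β, ?_, ?_, ?_⟩
    · exact Submodule.mem_span_pair.mpr ⟨1, 1, by module⟩
    · intro h
      have := hpair 1 1 (by simpa using h)
      exact one_ne_zero this.1
    · have : B (α + β) (α + β) = 2 + 2 * c := by
        simp [map_add, LinearMap.add_apply, hα, hβ, hba, ← hc]
        ring
      rw [this]; linarith
  · -- step computation
    have step : ∀ a b : ℝ, (rα ∘ rβ) (a • α + b • β) =
        ((4*c^2-1)*a + 2*c*b) • α + (-(2*c)*a - b) • β := by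
      intro a b
      have h1 : B (a • α + b • β) β = a * c + b := by
        simp [map_add, map_smul, LinearMap.add_apply, LinearMap.smul_apply,
          smul_eq_mul, hβ, ← hc]
      simp only [Function.comp_apply, hrβ, hrα, h1]
      have h2 : B (a • α + b • β - (2 * (a * c + b)) • β) α
          = a + (b - 2 * (a * c + b)) * c := by
        simp [map_add, map_sub, map_smul, LinearMap.add_apply, LinearMap.sub_apply,
          LinearMap.smul_apply, smul_eq_mul, hα, hba]
        ring
      rw [h2]
      match_scalars <;> ring
    have key : ∀ n : ℕ, ∃ a b : ℝ, (rα ∘ rβ)^[n] β = a • α + b • β ∧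
        a ≤ 2*c*n ∧ 1 ≤ b - a := by
      intro n
      induction n with
      | zero => exact ⟨0, 1, by simp, by simp, by norm_num⟩
      | succ n ih =>
        obtain ⟨a, b, hx, ha, hu⟩ := ih
        have hn : (0:ℝ) ≤ (n:ℝ) := Nat.cast_nonneg n
        have ha0 : a ≤ 0 := le_trans ha (by nlinarith)
        refine ⟨(4*c^2-1)*a + 2*c*b, -(2*c)*a - b, ?_, ?_, ?_⟩
        · rw [Function.iterate_succ_apply', hx, step]
        · have hcast : ((n+1:ℕ):ℝ) = (n:ℝ) + 1 := by push_cast; ring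
          rw [hcast]
          nlinarith [mul_nonneg (mul_nonneg (by nlinarith : (0:ℝ) ≤ (2*c-1)*(c+1)) (by linarith : (0:ℝ) ≤ -a)) (le_refl (0:ℝ)),
            mul_nonneg (by nlinarith : (0:ℝ) ≤ (2*c-1)*(c+1)) (by linarith : (0:ℝ) ≤ -a),
            mul_nonneg (by linarith : (0:ℝ) ≤ -2*c) (by linarith : (0:ℝ) ≤ b - a - 1)]
        · nlinarith [mul_nonneg (by nlinarith : (0:ℝ) ≤ (-4*c)*(-(1+c))) (by linarith : (0:ℝ) ≤ -a),
            mul_nonneg (by linarith : (0:ℝ) ≤ -(1+2*c)) (by linarith : (0:ℝ) ≤ b - a - 1)]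
    intro n hn
    refine ⟨β, fun h => ?_⟩
    obtain ⟨a, b, hx, ha, hu⟩ := key n
    rw [h] at hx
    have heq : a • α + (b - 1) • β = 0 := by
      rw [sub_smul, one_smul, show a • α + (b • β - β) = a • α + b • β - β from by abel,
        ← hx, sub_self]
    have := (hpair a (b-1) heq).1
    have hn1 : (1:ℝ) ≤ (n:ℝ) := by exact_mod_cast hn
    nlinarith
end

section
/- Let B be a symmetric bilinear form on V and let α, β be unit vectors with B(α,β) = 1. Set t = r_α ∘ r_β (composition of the two reflections). Then for every integer n, B(α, tⁿ(β)) = 1. -/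
/-!
With `a = B(α, x)` and `b = B(β, x)`, the map `t = r_α ∘ r_β` acts on the pair `(a, b)` by
`(a, b) ↦ (2b - a, 3b - 2a)`. So `a - b = B(α - β, x)` is `t`-invariant and `t` shifts `a` by
`-2 (a - b)`, whence `B(α, tⁿ x) = B(α, x) - 2n B(α - β, x)` for all `n : ℤ`. For `x = β`
the shift vanishes because `B(α - β, β) = 0`.
-/

section ZpowSmul

variable {G X A : Type*} [Group G] [MulAction G X] {g : G}

theorem apply_zpow_smul_of_apply_smul {ψ : X → A} (hψ : ∀ x, ψ (g • x) = ψ x) (n : ℤ) (x : X) :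
    ψ ((g ^ n) • x) = ψ x := by
  induction n using Int.induction_on with
  | zero => rw [zpow_zero, one_smul]
  | succ n ih => rw [add_comm, zpow_one_add, mul_smul, hψ, ih]
  | pred n ih => rw [← ih, ← hψ, ← mul_smul, ← zpow_one_add, add_sub_cancel]

theorem apply_zpow_smul_of_apply_smul_eq_add [AddCommGroup A] {φ ψ : X → A}
    (hψ : ∀ x, ψ (g • x) = ψ x) (hφ : ∀ x, φ (g • x) = φ x + ψ x) (n : ℤ) (x : X) :
    φ ((g ^ n) • x) = φ x + n • ψ x := by
  induction n using Int.induction_on with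
  | zero => rw [zpow_zero, one_smul, zero_smul, add_zero]
  | succ n ih =>
    rw [add_comm, zpow_one_add, mul_smul, hφ, ih, apply_zpow_smul_of_apply_smul hψ, add_smul,
      one_smul, add_assoc, add_comm (ψ x)]
  | pred n ih =>
    have hstep := hφ ((g ^ (-(n : ℤ) - 1)) • x)
    rw [← mul_smul, ← zpow_one_add, add_sub_cancel, ih, apply_zpow_smul_of_apply_smul hψ] at hstep
    rw [sub_smul, one_smul, ← add_sub_assoc, hstep, add_sub_cancel_right]

end ZpowSmul

section Reflection

variable {R V : Type*} [CommRing R] [AddCommGroup V] [Module R V] (B : V →ₗ[R] V →ₗ[R] R)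

/-- `r_γ`; a genuine reflection only when `B γ γ = 1`. -/
def reflection (γ x : V) : V := x - (2 * B x γ) • γ

theorem apply_reflection (γ δ x : V) :
    B δ (reflection B γ x) = B δ x - 2 * B x γ * B δ γ := by
  simp only [reflection, map_sub, map_smul, smul_eq_mul]

variable {B} {α β : V}

theorem apply_reflection_reflection_left (hsymm : ∀ x y, B x y = B y x) (hα : B α α = 1)
    (hab : B α β = 1) (x : V) :
    B α (reflection B α (reflection B β x)) = B α x - 2 * B (α - β) x := by
  simp only [apply_reflection, hsymm (reflection B β x) α, hsymm x β, hα, hab, map_sub,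
    LinearMap.sub_apply]
  ring

theorem apply_reflection_reflection_sub (hsymm : ∀ x y, B x y = B y x) (hα : B α α = 1)
    (hβ : B β β = 1) (hab : B α β = 1) (x : V) :
    B (α - β) (reflection B α (reflection B β x)) = B (α - β) x := by
  simp only [map_sub, LinearMap.sub_apply, apply_reflection, hsymm (reflection B β x) α,
    hsymm x β, hα, hβ, hab, hsymm β α]
  ring

end Reflection

theorem pairing_one_invariant_under_translation
    (V : Type*) [AddCommGroup V] [Module ℝ V]
    (B : V →ₗ[ℝ] V →ₗ[ℝ] ℝ) (hsymm : ∀ x y, B x y = B y x)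
    (α β : V) (hα : B α α = 1) (hβ : B β β = 1) (hab : B α β = 1)
    (t : V ≃ₗ[ℝ] V)
    (ht : ∀ x, t x = (x - (2 * B x β) • β) - (2 * B (x - (2 * B x β) • β) α) • α) :
    ∀ n : ℤ, B α ((t ^ n) β) = 1 := by
  have ht' : ∀ x, t • x = reflection B α (reflection B β x) := ht
  intro n
  have hshift := apply_zpow_smul_of_apply_smul_eq_add (φ := B α) (ψ := fun x ↦ -2 * B (α - β) x)
    (fun x ↦ by rw [ht', apply_reflection_reflection_sub hsymm hα hβ hab])
    (fun x ↦ by rw [ht', apply_reflection_reflection_left hsymm hα hab]; ring) n β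
  have hβ_orth : B (α - β) β = 0 := by
    rw [map_sub, LinearMap.sub_apply, hab, hβ, sub_self]
  rwa [hβ_orth, mul_zero, smul_zero, add_zero, hab] at hshift
end

section
/- Let B be a symmetric bilinear form on V, and let (α_i)_{0 ≤ i ≤ k} be unit vectors such that B(α_i, α_j) = 1 for all i, j and r_{α_{i+1}}(α_i) = -α_{i+2} for all i ≤ k-2. Then α_0 = k·α_{k-1} + (k-1)·r_{α_{k-1}}(α_{k-2}), and writing β = r_{α_{k-1}}(α_{k-2}), one has B(β, α_{k-1}) = -1. -/
theorem dihedral_chain_formula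
    (V : Type*) [AddCommGroup V] [Module ℝ V]
    (B : V →ₗ[ℝ] V →ₗ[ℝ] ℝ) (hsymm : ∀ x y, B x y = B y x)
    (k : ℕ) (hk : 2 ≤ k) (α : ℕ → V)
    (hunit : ∀ i ≤ k, B (α i) (α i) = 1)
    (hpair : ∀ i ≤ k, ∀ j ≤ k, B (α i) (α j) = 1)
    (hrec : ∀ i, i ≤ k - 2 →
      α i - (2 * B (α i) (α (i+1))) • α (i+1) = -(α (i+2))) :
    α 0 = (k : ℝ) • α (k-1)
        + ((k : ℝ) - 1) • (α (k-2) - (2 * B (α (k-2)) (α (k-1))) • α (k-1)) ∧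
    B (α (k-2) - (2 * B (α (k-2)) (α (k-1))) • α (k-1)) (α (k-1)) = -1 := by
  obtain ⟨m, rfl⟩ : ∃ m, k = m + 2 := ⟨k - 2, by omega⟩
  have h1 : m + 2 - 1 = m + 1 := rfl
  have h2 : m + 2 - 2 = m := rfl
  rw [h1, h2]
  have hB : B (α m) (α (m+1)) = 1 := hpair m (by omega) (m+1) (by omega)
  have step : ∀ i ≤ m, α (i+2) = (2:ℝ) • α (i+1) - α i := by
    intro i hi
    have h := hrec i (by omega)
    rw [hpair i (by omega) (i+1) (by omega)] at h
    linear_combination (norm := module) h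
  have key : ∀ i ≤ m, α 0 = ((i:ℝ) + 1) • α i - (i:ℝ) • α (i+1) := by
    intro i
    induction i with
    | zero => intro _; simp
    | succ n ih =>
      intro hn
      have h := ih (by omega)
      have hs := step n (by omega)
      rw [h, hs]
      push_cast
      module
  have hk0 := key m le_rfl
  constructor
  · rw [hk0, hB]
    push_cast
    module
  · simp only [map_sub, map_smul, LinearMap.sub_apply, LinearMap.smul_apply,
      smul_eq_mul, hB, hunit (m+1) (by omega)]
    ring
end

section
/- Let G be a group and φ : G → G an injective homomorphism. Suppose there exist integers k ≥ 0, l ≥ 1 and g ∈ G such that for all w ∈ G: g·φ^k(w)·g⁻¹ = φ^{k+l}(w). Then for all w ∈ G, φ^l(g)·φ^{k+l}(w)·φ^l(g)⁻¹ = g·φ^{k+l}(w)·g⁻¹; consequently g⁻¹·φ^l(g) centralizes the subgroup φ^{k+l}(G). -/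
theorem conjugating_element_centralizes_image
    (G : Type*) [Group G] (φ : G →* G) (hφ : Function.Injective φ)
    (k l : ℕ) (hl : 1 ≤ l) (g : G)
    (h : ∀ w : G, g * (⇑φ)^[k] w * g⁻¹ = (⇑φ)^[k+l] w) :
    (∀ w : G, (⇑φ)^[l] g * (⇑φ)^[k+l] w * ((⇑φ)^[l] g)⁻¹
        = g * (⇑φ)^[k+l] w * g⁻¹) ∧
    (∀ w : G, (g⁻¹ * (⇑φ)^[l] g) * (⇑φ)^[k+l] w
        = (⇑φ)^[k+l] w * (g⁻¹ * (⇑φ)^[l] g)) := by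
  have key : ∀ w : G, (⇑φ)^[l] g * (⇑φ)^[k+l] w * ((⇑φ)^[l] g)⁻¹
      = g * (⇑φ)^[k+l] w * g⁻¹ := by
    intro w
    have h1 := congrArg (⇑φ)^[l] (h w)
    simp only [iterate_map_mul, iterate_map_inv] at h1
    have e1 : (⇑φ)^[l] ((⇑φ)^[k+l] w) = (⇑φ)^[k+l] ((⇑φ)^[l] w) := by
      rw [← Function.iterate_add_apply, ← Function.iterate_add_apply, Nat.add_comm]
    have h2 := h ((⇑φ)^[l] w)
    have e2 : (⇑φ)^[k] ((⇑φ)^[l] w) = (⇑φ)^[k+l] w := by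
      rw [← Function.iterate_add_apply, Nat.add_comm]
    have e3 : (⇑φ)^[l] ((⇑φ)^[k] w) = (⇑φ)^[k+l] w := by
      rw [← Function.iterate_add_apply, Nat.add_comm]
    rw [e3] at h1
    rw [e1] at h1
    rw [e2] at h2
    exact h1.trans h2.symm
  refine ⟨key, fun w => ?_⟩
  calc (g⁻¹ * (⇑φ)^[l] g) * (⇑φ)^[k+l] w
      = g⁻¹ * ((⇑φ)^[l] g * (⇑φ)^[k+l] w * ((⇑φ)^[l] g)⁻¹) * ((⇑φ)^[l] g) := by group
    _ = g⁻¹ * (g * (⇑φ)^[k+l] w * g⁻¹) * ((⇑φ)^[l] g) := by rw [key w]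
    _ = (⇑φ)^[k+l] w * (g⁻¹ * (⇑φ)^[l] g) := by group
end
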